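/- Let q be a prime power, let b be a Baer subgenerator of H(3,q²) with a point in the Hermitian curve O, and let A ∈ GU₃(q) be such that the collineation M_A = diag(A,1) maps b onto itself. Then det A = 1. -/

import Mathlib

open Projectivization Module Matrix

-- incidence graph & generalised hexagon
def IncGraph {P L : Type*} (I : P → L → Prop) : SimpleGraph (P ⊕ L) :=
  SimpleGraph.fromRel (fun a b =>
    match a, b with
    | Sum.inl p, Sum.inr l => I p l
    | _, _ => False)

/-- A point-line incidence structure is a generalised hexagon of order `(s,t)` if every line has
`s+1` points, every point is on `t+1` lines, and the bipartite incidence graph is connected with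
diameter 6 and girth 12. -/
def IsGenHexagon {P L : Type*} (I : P → L → Prop) (s t : ℕ) : Prop :=
  (∀ l : L, Nat.card {p : P // I p l} = s + 1) ∧
  (∀ p : P, Nat.card {l : L // I p l} = t + 1) ∧
  (IncGraph I).Connected ∧ (IncGraph I).diam = 6 ∧ (IncGraph I).girth = 12

-- Hermitian model
abbrev PG3 (F : Type*) [Field F] := Projectivization F (Fin 4 → F)

def herm (q : ℕ) {F : Type*} [Field F] (x y : Fin 4 → F) : F := ∑ i, x i * (y i) ^ q

def HermPts (q : ℕ) (F : Type*) [Field F] : Set (PG3 F) := {P | herm q P.rep P.rep = 0}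

def OCurve (q : ℕ) (F : Type*) [Field F] : Set (PG3 F) :=
  {P | P ∈ HermPts q F ∧ P.rep 3 = 0}

def AffPts (q : ℕ) (F : Type*) [Field F] : Set (PG3 F) :=
  {P | P ∈ HermPts q F ∧ P.rep 3 ≠ 0}

def IsGenerator (q : ℕ) {F : Type*} [Field F] (W : Submodule F (Fin 4 → F)) : Prop :=
  finrank F W = 2 ∧ ∀ x ∈ W, ∀ y ∈ W, herm q x y = 0

def IsBaerSubline (q : ℕ) {F : Type*} [Field F] (s : Set (PG3 F)) : Prop :=
  ∃ v w : Fin 4 → F, LinearIndependent F ![v, w] ∧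
    s = {P | ∃ a b : F, a ^ q = a ∧ b ^ q = b ∧
          a • v + b • w ≠ 0 ∧ a • v + b • w ∈ P.submodule}

def IsBaerSubgenerator (q : ℕ) {F : Type*} [Field F] (s : Set (PG3 F)) : Prop :=
  IsBaerSubline q s ∧ ∃ W : Submodule F (Fin 4 → F), IsGenerator q W ∧ ∀ P ∈ s, P.rep ∈ W

def IsBaerSubplane (q : ℕ) {F : Type*} [Field F] (s : Set (PG3 F)) : Prop :=
  ∃ u v w : Fin 4 → F, LinearIndependent F ![u, v, w] ∧
    s = {P | ∃ a b c : F, a ^ q = a ∧ b ^ q = b ∧ c ^ q = c ∧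
          a • u + b • v + c • w ≠ 0 ∧ a • u + b • v + c • w ∈ P.submodule}

/-- `GU₃(q)`: matrices with `A ⬝ (A^(q))ᵀ = 1`. -/
def IsGU3 (q : ℕ) {F : Type*} [Field F] (A : Matrix (Fin 3) (Fin 3) F) : Prop :=
  A * (A.map (· ^ q))ᵀ = 1

/-- The 4×4 block matrix `diag(A,1)`. -/
def MA {F : Type*} [Field F] (A : Matrix (Fin 3) (Fin 3) F) : Matrix (Fin 4) (Fin 4) F :=
  Matrix.of fun i j =>
    if hi : (i : ℕ) < 3 then
      if hj : (j : ℕ) < 3 then A ⟨i, hi⟩ ⟨j, hj⟩ else 0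
    else if (j : ℕ) < 3 then 0 else 1

/-- Image of a set of points of `PG(3,q²)` under the collineation induced by an invertible
matrix `M`. -/
def matImage {F : Type*} [Field F] (M : Matrix (Fin 4) (Fin 4) F) (s : Set (PG3 F)) :
    Set (PG3 F) :=
  {P' | ∃ P ∈ s, M.mulVec P.rep ≠ 0 ∧ M.mulVec P.rep ∈ P'.submodule}

/-!
Let `σ x = x ^ q`, an involutive automorphism of `GF(q²)` with fixed field `GF(q)`. The Baer
subgenerator consists of the points spanned by the nonzero vectors of a two-dimensional
`GF(q)`-space inside a totally isotropic plane. The Hermitian curve `O` contains no line, so this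
space is spanned over `GF(q)` by a vector `x` with `x₃ = 0` (the point on `O`) and a vector `y`
with `y₃ ≠ 0`. Since `M_A` fixes the coordinate `X₃` and stabilises the Baer subline, comparing
the images of `x`, `y` and `x + y` gives `M_A x = μ x` with `μ ∈ GF(q)` and `M_A y = c x + y`.
In `X₃ = 0`, completing the restrictions of `x` and `y` by a vector `u` with `⟨u, x⟩ = 1` makes
`A` triangular with diagonal `μ, 1, g`; unitarity gives `⟨A u, A x⟩ = μ ^ q g = 1`, hence
`det A = μ g = 1`.
-/

open Submodule
open scoped LinearAlgebra.Projectivization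

theorem exists_ringHom_eq_pow {F : Type*} [Field F] [Fintype F] {q : ℕ} (hq : IsPrimePow q)
    (hF : q ∣ Fintype.card F) : ∃ φ : F →+* F, ∀ x, φ x = x ^ q := by
  obtain ⟨p, s, hp, hs, rfl⟩ := hq
  have hp : p.Prime := Nat.prime_iff.2 hp
  have := Fact.mk hp
  have : Fact (ringChar F).Prime := ⟨CharP.char_is_prime F _⟩
  have hpF : p ∣ ringChar F :=
    (prime_dvd_char_iff_dvd_card p).2 ((dvd_pow_self p hs.ne').trans hF)
  have : CharP F p := (Nat.prime_dvd_prime_iff_eq hp Fact.out |>.1 hpF) ▸ ringChar.charP F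
  have : ExpChar F p := ExpChar.prime hp
  exact ⟨iterateFrobenius F p s, iterateFrobenius_def p s⟩

section Hermitian

variable {F : Type*} [Field F] {σ : F →+* F}

theorem linearIndependent_comp_ringHom {n ι : Type*} (hσ : Function.Involutive σ)
    {x : ι → n → F} (hx : LinearIndependent F x) :
    LinearIndependent F fun i => σ ∘ x i := by
  refine hx.map_of_injective_injective σ (σ.toAddMonoidHom.compLeft n) (fun r hr => ?_)
    (fun m hm => ?_) (fun r m => ?_)
  · simpa [hσ r] using congrArg σ hr
  · funext i; simpa using congrFun hm i
  · funext i; simp [hσ r]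

theorem two_mul_card_le_of_isotropic {n ι : Type*} [Fintype n] [Fintype ι]
    (hσ : Function.Involutive σ) {x : ι → n → F} (hx : LinearIndependent F x)
    (hiso : ∀ i j, x i ⬝ᵥ σ ∘ x j = 0) :
    2 * Fintype.card ι ≤ Fintype.card n := by
  have hmul : of x * ((of x).map σ)ᵀ = 0 := by
    ext i j; exact hiso i j
  have h := rank_add_rank_le_card_of_mul_eq_zero hmul
  rwa [rank_transpose, LinearIndependent.rank_matrix (M := of x) hx,
    LinearIndependent.rank_matrix (M := (of x).map σ) (linearIndependent_comp_ringHom hσ hx),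
    ← two_mul] at h

theorem dotProduct_comp_mulVec_of_unitary {n : Type*} [Fintype n] [DecidableEq n]
    {A : Matrix n n F} (hA : A * (A.map σ)ᵀ = 1) (x y : n → F) :
    A *ᵥ x ⬝ᵥ σ ∘ (A *ᵥ y) = x ⬝ᵥ σ ∘ y := by
  have hA' : Aᵀ * A.map σ = 1 := by
    simpa [transpose_mul] using congrArg transpose (mul_eq_one_comm.mp hA)
  have hσ : σ ∘ (A *ᵥ y) = A.map σ *ᵥ (σ ∘ y) := funext (RingHom.map_mulVec σ A y)
  rw [hσ, dotProduct_mulVec, ← vecMul_transpose, vecMul_vecMul, hA', vecMul_one]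

theorem exists_dotProduct_eq_one {n : Type*} [Fintype n] [DecidableEq n] {y : n → F}
    (hy : y ≠ 0) : ∃ u : n → F, u ⬝ᵥ y = 1 := by
  obtain ⟨i, hi⟩ := Function.ne_iff.mp hy
  exact ⟨(y i)⁻¹ • Pi.single i 1, by simp [inv_mul_cancel₀ hi]⟩

theorem linearIndependent_of_isotropic_flag {v w u : Fin 3 → F} (hv : v ≠ 0)
    (hvv : v ⬝ᵥ σ ∘ v = 0) (hvw : v ⬝ᵥ σ ∘ w = 0) (hwv : w ⬝ᵥ σ ∘ v = 0)
    (hww : w ⬝ᵥ σ ∘ w ≠ 0) (huv : u ⬝ᵥ σ ∘ v = 1) :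
    LinearIndependent F ![v, w, u] := by
  rw [Fintype.linearIndependent_iff]
  intro g hg
  simp only [Fin.sum_univ_three, cons_val_zero, cons_val_one, cons_val_two, head_cons,
    tail_cons] at hg
  have h2 : g 2 = 0 := by
    simpa [add_dotProduct, hvv, hwv, huv] using congrArg (· ⬝ᵥ σ ∘ v) hg
  have h1 : g 1 = 0 := by
    simpa [add_dotProduct, hvw, h2, hww] using congrArg (· ⬝ᵥ σ ∘ w) hg
  have h0 : g 0 = 0 := by
    simpa [h1, h2, hv] using hg
  intro i; fin_cases i <;> assumption

theorem det_eq_of_triangular_action {A : Matrix (Fin 3) (Fin 3) F} {v w u : Fin 3 → F}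
    (hind : LinearIndependent F ![v, w, u]) {μ c g₀ g₁ g₂ : F}
    (hAv : A *ᵥ v = μ • v) (hAw : A *ᵥ w = c • v + w)
    (hAu : A *ᵥ u = g₀ • v + g₁ • w + g₂ • u) :
    A.det = μ * g₂ := by
  set P : Matrix (Fin 3) (Fin 3) F := of ![v, w, u]
  have hP : P.det ≠ 0 :=
    ((isUnit_iff_isUnit_det P).mp (linearIndependent_rows_iff_isUnit.mp hind)).ne_zero
  have hrow : ∀ i, (P * Aᵀ) i = A *ᵥ ![v, w, u] i := fun i => by
    ext j; simp [P, mul_apply, mulVec, dotProduct, mul_comm]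
  have hconj : P * Aᵀ = !![μ, 0, 0; c, 1, 0; g₀, g₁, g₂] * P := by
    ext i j
    rw [hrow]
    fin_cases i <;> simp [P, hAv, hAw, hAu, mul_apply, Fin.sum_univ_three]
  have hL : (!![μ, 0, 0; c, 1, 0; g₀, g₁, g₂] : Matrix (Fin 3) (Fin 3) F).det = μ * g₂ := by
    simp [det_fin_three]
  have := congrArg det hconj
  rw [det_mul, det_mul, det_transpose, mul_comm, hL] at this
  exact mul_right_cancel₀ hP this

theorem det_eq_one_of_isotropic_flag {A : Matrix (Fin 3) (Fin 3) F}
    (hA : A * (A.map σ)ᵀ = 1) {v w : Fin 3 → F} {μ c : F} (hv : v ≠ 0) (hμ : σ μ = μ)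
    (hAv : A *ᵥ v = μ • v) (hAw : A *ᵥ w = c • v + w) (hvv : v ⬝ᵥ σ ∘ v = 0)
    (hvw : v ⬝ᵥ σ ∘ w = 0) (hwv : w ⬝ᵥ σ ∘ v = 0) (hww : w ⬝ᵥ σ ∘ w ≠ 0) :
    A.det = 1 := by
  have hσv : σ ∘ v ≠ 0 := fun h => hv (funext fun i => σ.injective (by simpa using congrFun h i))
  obtain ⟨u, huv⟩ := exists_dotProduct_eq_one hσv
  have hind := linearIndependent_of_isotropic_flag hv hvv hvw hwv hww huv
  obtain ⟨g, hAu⟩ := (mem_span_range_iff_exists_fun F).mp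
    (hind.span_eq_top_of_card_eq_finrank (by simp) ▸ mem_top (x := A *ᵥ u))
  simp only [Fin.sum_univ_three, cons_val_zero, cons_val_one, cons_val_two, head_cons,
    tail_cons] at hAu
  have hg₂ : μ * g 2 = 1 := by
    have h := dotProduct_comp_mulVec_of_unitary hA u v
    rw [hAv, ← hAu, huv] at h
    have hσμ : σ ∘ (μ • v) = μ • (σ ∘ v) := funext fun i => by simp [hμ]
    simpa [hσμ, add_dotProduct, hvv, hwv, huv, mul_comm] using h
  rw [det_eq_of_triangular_action hind hAv hAw hAu.symm, hg₂]

end Hermitian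

section BaerSubline

theorem span_pair_eq_of_linearIndependent {K V : Type*} [Field K] [AddCommGroup V]
    [Module K V] {v w x y : V} (hx : x ∈ span K {v, w}) (hy : y ∈ span K {v, w})
    (hxy : LinearIndependent K ![x, y]) : span K {x, y} = span K {v, w} := by
  classical
  have := FiniteDimensional.span_of_finite K (Set.toFinite {v, w})
  refine eq_of_le_of_finrank_le (span_le.mpr (Set.insert_subset hx (by simpa using hy))) ?_
  have hle : finrank K (span K {v, w}) ≤ 2 :=
    (finrank_span_le_card _).trans (by simpa using Finset.card_le_two)
  have heq : finrank K (span K {x, y}) = 2 := by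
    rw [← range_cons_cons_empty x y ![], finrank_span_eq_card hxy, Fintype.card_fin]
  omega

variable {F V : Type*} [Field F] [AddCommGroup V] [Module F V]

theorem LinearIndependent.pair_of_map_eq_zero {ℓ : V →ₗ[F] F} {x y : V} (hx : x ≠ 0)
    (hℓx : ℓ x = 0) (hℓy : ℓ y ≠ 0) : LinearIndependent F ![x, y] := by
  refine LinearIndependent.pair_iff.mpr fun a c h => ?_
  have hc : c = 0 := by simpa [hℓx, hℓy] using congrArg ℓ h
  subst hc
  simpa [hx] using h

theorem exists_eigenvalue_mem_of_maps_span_pair (K : Subfield F) {x y : V}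
    (hxy : LinearIndependent F ![x, y]) {T : V →ₗ[F] V} {ℓ : V →ₗ[F] F}
    (hℓT : ∀ z, ℓ (T z) = ℓ z) (hℓx : ℓ x = 0) (hℓy : ℓ y ≠ 0)
    (hT : ∀ z ∈ span K {x, y}, z ≠ 0 → ∃ k : F, ∃ z' ∈ span K {x, y}, T z = k • z') :
    ∃ μ ∈ K, ∃ c : F, T x = μ • x ∧ T y = c • x + y := by
  have hpair := LinearIndependent.pair_iff.mp hxy
  have hcoord : ∀ a c : F, a ∈ K → c ∈ K → (a, c) ≠ 0 →
      ∃ k a' c' : F, a' ∈ K ∧ c' ∈ K ∧ T (a • x + c • y) = k • (a' • x + c' • y) ∧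
        k * c' * ℓ y = c * ℓ y := by
    intro a c ha hc hac
    have hmem : a • x + c • y ∈ span K {x, y} :=
      mem_span_pair.mpr ⟨⟨a, ha⟩, ⟨c, hc⟩, rfl⟩
    have hne : a • x + c • y ≠ 0 := fun h => hac (Prod.ext (hpair a c h).1 (hpair a c h).2)
    obtain ⟨k, z', hz', hTz⟩ := hT _ hmem hne
    obtain ⟨a', c', rfl⟩ := mem_span_pair.mp hz'
    simp only [Subfield.smul_def] at hTz
    refine ⟨k, a', c', a'.2, c'.2, hTz, ?_⟩
    have := congrArg ℓ hTz
    simp only [hℓT, map_add, map_smul, hℓx, smul_eq_mul] at this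
    linear_combination -this
  obtain ⟨k₁, a₁, c₁, -, -, h₁, hc₁⟩ := hcoord 1 0 K.one_mem K.zero_mem (by simp)
  obtain ⟨k₂, a₂, c₂, ha₂, hc₂, h₂, hc₂'⟩ := hcoord 0 1 K.zero_mem K.one_mem (by simp)
  obtain ⟨k₃, a₃, c₃, ha₃, hc₃, h₃, hc₃'⟩ := hcoord 1 1 K.one_mem K.one_mem (by simp)
  simp only [one_smul, zero_smul, add_zero, zero_add] at h₁ h₂ h₃
  have hk₁ : k₁ * c₁ = 0 := by simpa [hℓy] using hc₁
  have hk₂ : k₂ * c₂ = 1 := by simpa [hℓy] using hc₂'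
  have hk₃ : k₃ * c₃ = 1 := by simpa [hℓy] using hc₃'
  have hTx : T x = (k₁ * a₁) • x := by
    rw [h₁, smul_add, smul_smul, smul_smul, hk₁, zero_smul, add_zero]
  have hTy : T y = (k₂ * a₂) • x + y := by
    rw [h₂, smul_add, smul_smul, smul_smul, hk₂, one_smul]
  have hμ : k₁ * a₁ = k₃ * a₃ - k₂ * a₂ := by
    have h : (k₁ * a₁ + k₂ * a₂ - k₃ * a₃) • x + (1 - k₃ * c₃) • y = 0 := by
      rw [map_add, hTx, hTy] at h₃
      linear_combination (norm := module) h₃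
    linear_combination (hpair _ _ h).1
  refine ⟨k₁ * a₁, ?_, k₂ * a₂, hTx, hTy⟩
  rw [hμ, eq_inv_of_mul_eq_one_left hk₂, eq_inv_of_mul_eq_one_left hk₃]
  exact K.sub_mem (K.mul_mem (K.inv_mem hc₃) ha₃) (K.mul_mem (K.inv_mem hc₂) ha₂)

end BaerSubline

section Points

variable {F V : Type*} [Field F] [AddCommGroup V] [Module F V]

variable (F) in
def spannedPoints (S : Set V) : Set (ℙ F V) := {P | ∃ x ∈ S, x ≠ 0 ∧ x ∈ P.submodule}

theorem mk_mem_spannedPoints {S : Set V} {x : V} (hx : x ∈ S) (hx0 : x ≠ 0) :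
    mk F x hx0 ∈ spannedPoints F S :=
  ⟨x, hx, hx0, by rw [submodule_mk]; exact mem_span_singleton_self x⟩

theorem exists_smul_rep_mem_of_mem_spannedPoints {S : Set V} {P : ℙ F V}
    (hP : P ∈ spannedPoints F S) : ∃ t : F, t ≠ 0 ∧ t • P.rep ∈ S := by
  obtain ⟨x, hx, hx0, hxP⟩ := hP
  obtain ⟨t, rfl⟩ := mem_span_singleton.mp (P.submodule_eq ▸ hxP)
  exact ⟨t, left_ne_zero_of_smul hx0, hx⟩

theorem mem_of_forall_rep_mem {S : Set V} {W : Submodule F V}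
    (hW : ∀ P ∈ spannedPoints F S, P.rep ∈ W) {x : V} (hx : x ∈ S) : x ∈ W := by
  rcases eq_or_ne x 0 with rfl | hx0
  · exact W.zero_mem
  · obtain ⟨d, hd⟩ := exists_smul_eq_mk_rep F x hx0
    simpa [← hd, Units.smul_def, smul_mem_iff W d.ne_zero] using
      hW _ (mk_mem_spannedPoints hx hx0)

theorem setOf_baer_eq_spannedPoints {q : ℕ} {φ : F →+* F} (hφ : ∀ x, φ x = x ^ q) (v w : V) :
    {P : ℙ F V | ∃ a b : F, a ^ q = a ∧ b ^ q = b ∧ a • v + b • w ≠ 0 ∧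
        a • v + b • w ∈ P.submodule} =
      spannedPoints F (span (φ.eqLocusField (RingHom.id F)) {v, w} : Set V) := by
  ext P
  simp only [spannedPoints, Set.mem_ofPred_eq, SetLike.mem_coe, mem_span_pair]
  constructor
  · rintro ⟨a, b, ha, hb, h0, hP⟩
    exact ⟨_, ⟨⟨a, by simp [hφ, ha]⟩, ⟨b, by simp [hφ, hb]⟩, rfl⟩, h0, hP⟩
  · rintro ⟨_, ⟨a, b, rfl⟩, h0, hP⟩
    exact ⟨a, b, (hφ a).symm.trans a.2, (hφ b).symm.trans b.2, h0, hP⟩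

theorem exists_mulVec_eq_smul_of_matImage_subset {M : Matrix (Fin 4) (Fin 4) F}
    {S : Set (Fin 4 → F)} (hM : Function.Injective (M *ᵥ ·))
    (hS : matImage M (spannedPoints F S) ⊆ spannedPoints F S) {z : Fin 4 → F} (hz : z ∈ S)
    (hz0 : z ≠ 0) : ∃ k : F, ∃ z' ∈ S, M *ᵥ z = k • z' := by
  have hMz : M *ᵥ z ≠ 0 := fun h => hz0 (hM (h.trans (mulVec_zero M).symm))
  obtain ⟨d, hd⟩ := exists_smul_eq_mk_rep F z hz0
  have hmem : mk F (M *ᵥ z) hMz ∈ matImage M (spannedPoints F S) := by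
    refine ⟨mk F z hz0, mk_mem_spannedPoints hz hz0, ?_, ?_⟩ <;>
      rw [← hd, Units.smul_def, mulVec_smul]
    · exact smul_ne_zero d.ne_zero hMz
    · rw [submodule_mk]; exact smul_mem _ _ (mem_span_singleton_self _)
  obtain ⟨t, ht, htS⟩ := exists_smul_rep_mem_of_mem_spannedPoints (hS hmem)
  obtain ⟨e, he⟩ := exists_smul_eq_mk_rep F (M *ᵥ z) hMz
  refine ⟨(t * e)⁻¹, _, htS, ?_⟩
  rw [← he, Units.smul_def, smul_smul, smul_smul, mul_assoc,
    inv_mul_cancel₀ (mul_ne_zero ht e.ne_zero), one_smul]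

end Points

section HermitianModel

variable {F : Type*} [Field F]

theorem init_MA_mulVec (A : Matrix (Fin 3) (Fin 3) F) (x : Fin 4 → F) :
    Fin.init (MA A *ᵥ x) = A *ᵥ Fin.init x := by
  ext i
  fin_cases i <;> simp [MA, mulVec, dotProduct, Fin.sum_univ_four, Fin.sum_univ_three, Fin.init]

theorem MA_mulVec_three (A : Matrix (Fin 3) (Fin 3) F) (x : Fin 4 → F) :
    (MA A *ᵥ x) 3 = x 3 := by
  simp [MA, mulVec, dotProduct, Fin.sum_univ_four]

theorem eq_of_init_eq {α : Type*} {x y : Fin 4 → α} (h : Fin.init x = Fin.init y)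
    (h3 : x 3 = y 3) : x = y :=
  funext fun i => Fin.lastCases h3 (fun j => congrFun h j) i

theorem MA_mulVec_injective {A : Matrix (Fin 3) (Fin 3) F} (hA : IsUnit A) :
    Function.Injective (MA A *ᵥ ·) := fun x y h => by
  refine eq_of_init_eq (mulVec_injective_iff_isUnit.mpr hA ?_) ?_
  · simpa only [init_MA_mulVec] using congrArg Fin.init h
  · simpa only [MA_mulVec_three] using congrFun h 3

theorem herm_eq_dotProduct_init {q : ℕ} {φ : F →+* F} (hφ : ∀ x, φ x = x ^ q)
    (x y : Fin 4 → F) : herm q x y = Fin.init x ⬝ᵥ φ ∘ Fin.init y + x 3 * φ (y 3) := by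
  simp [herm, Fin.sum_univ_castSucc, dotProduct, Fin.init, hφ]

theorem exists_apply_three_ne_zero_of_isotropic {q : ℕ} {φ : F →+* F}
    (hφ : ∀ x, φ x = x ^ q) (hφφ : Function.Involutive φ) {W : Submodule F (Fin 4 → F)}
    (hW : ∀ x ∈ W, ∀ y ∈ W, herm q x y = 0) {v w : Fin 4 → F}
    (hvw : LinearIndependent F ![v, w]) (hv : v ∈ W) (hw : w ∈ W) : v 3 ≠ 0 ∨ w 3 ≠ 0 := by
  by_contra! h
  obtain ⟨hv3, hw3⟩ := h
  have hind : LinearIndependent F ![Fin.init v, Fin.init w] :=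
    LinearIndependent.pair_iff.mpr fun a c h =>
      LinearIndependent.pair_iff.mp hvw a c (eq_of_init_eq h (by simp [hv3, hw3]))
  have hdot : ∀ {x y}, x ∈ W → y ∈ W → x 3 = 0 → Fin.init x ⬝ᵥ φ ∘ Fin.init y = 0 :=
    fun hx hy hx3 => by simpa [herm_eq_dotProduct_init hφ, hx3] using hW _ hx _ hy
  have hiso : ∀ i j, ![Fin.init v, Fin.init w] i ⬝ᵥ φ ∘ ![Fin.init v, Fin.init w] j = 0 := by
    intro i j
    fin_cases i <;> fin_cases j
    exacts [hdot hv hv hv3, hdot hv hw hv3, hdot hw hv hw3, hdot hw hw hw3]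
  simpa using two_mul_card_le_of_isotropic hφφ hind hiso

theorem det_eq_one_of_MA_flag {q : ℕ} {φ : F →+* F} (hφ : ∀ x, φ x = x ^ q)
    {A : Matrix (Fin 3) (Fin 3) F} (hA : IsGU3 q A) {W : Submodule F (Fin 4 → F)}
    (hW : ∀ x ∈ W, ∀ y ∈ W, herm q x y = 0) {x y : Fin 4 → F} (hx : x ∈ W) (hy : y ∈ W)
    (hx0 : x ≠ 0) (hx3 : x 3 = 0) (hy3 : y 3 ≠ 0) {μ c : F} (hμ : φ μ = μ)
    (hAx : MA A *ᵥ x = μ • x) (hAy : MA A *ᵥ y = c • x + y) : A.det = 1 := by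
  have hA' : A * (A.map φ)ᵀ = 1 := by
    rwa [show (A.map φ) = A.map (· ^ q) from by ext; simp [hφ]]
  have hdot : ∀ {a b}, a ∈ W → b ∈ W → Fin.init a ⬝ᵥ φ ∘ Fin.init b = -(a 3 * φ (b 3)) :=
    fun ha hb => by
      linear_combination (herm_eq_dotProduct_init hφ _ _).symm.trans (hW _ ha _ hb)
  refine det_eq_one_of_isotropic_flag hA' (v := Fin.init x) (w := Fin.init y) (c := c)
    (fun h => hx0 (eq_of_init_eq h hx3)) hμ ?_ ?_ ?_ ?_ ?_ ?_
  · rw [← init_MA_mulVec, hAx]; rfl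
  · rw [← init_MA_mulVec, hAy]; rfl
  · simp [hdot hx hx, hx3]
  · simp [hdot hx hy, hx3]
  · simp [hdot hy hx, hx3]
  · simp [hdot hy hy, hy3]

end HermitianModel

/-- If `M_A` stabilises a Baer subgenerator with a point in `O`,
then `det A = 1`. -/
theorem statement_2 (q : ℕ) (hq : IsPrimePow q) (F : Type) [Field F] [Fintype F]
    (hF : Fintype.card F = q ^ 2)
    (b : Set (PG3 F))
    (hb : IsBaerSubgenerator q b) (hbO : ∃ P ∈ b, P ∈ OCurve q F)
    (A : Matrix (Fin 3) (Fin 3) F) (hA : IsGU3 q A)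
    (hfix : matImage (MA A) b = b) :
    A.det = 1 := by
  obtain ⟨φ, hφ⟩ := exists_ringHom_eq_pow hq (hF ▸ dvd_pow_self q two_ne_zero)
  have hφφ : Function.Involutive φ := fun x => by
    rw [hφ, hφ, ← pow_mul, ← sq, ← hF, FiniteField.pow_card]
  obtain ⟨⟨v, w, hvw, rfl⟩, W, ⟨-, hW⟩, hbW⟩ := hb
  set K := φ.eqLocusField (RingHom.id F)
  rw [setOf_baer_eq_spannedPoints hφ] at hbO hfix hbW
  have hSW : ∀ z ∈ span K {v, w}, z ∈ W := fun _ => mem_of_forall_rep_mem hbW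
  obtain ⟨x, hx, hx0, hx3⟩ : ∃ x ∈ span K {v, w}, x ≠ 0 ∧ x 3 = 0 := by
    obtain ⟨P, hP, -, hP3⟩ := hbO
    obtain ⟨t, ht, htP⟩ := exists_smul_rep_mem_of_mem_spannedPoints hP
    exact ⟨t • P.rep, htP, smul_ne_zero ht P.rep_nonzero, by simp [hP3]⟩
  obtain ⟨y, hy, hy3⟩ : ∃ y ∈ span K {v, w}, y 3 ≠ 0 := by
    rcases exists_apply_three_ne_zero_of_isotropic hφ hφφ hW hvw (hSW _ (subset_span (by simp)))
      (hSW _ (subset_span (by simp))) with h | h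
    exacts [⟨v, subset_span (by simp), h⟩, ⟨w, subset_span (by simp), h⟩]
  have hxy : LinearIndependent F ![x, y] :=
    .pair_of_map_eq_zero (ℓ := LinearMap.proj 3) hx0 hx3 hy3
  have hspan := span_pair_eq_of_linearIndependent hx hy (hxy.restrict_scalars' K)
  have hAinj := MA_mulVec_injective (A := A)
    ((isUnit_iff_isUnit_det A).mpr (isUnit_det_of_right_inverse hA))
  obtain ⟨μ, hμ, c, hAx, hAy⟩ := exists_eigenvalue_mem_of_maps_span_pair K hxy
    (T := (MA A).mulVecLin) (ℓ := LinearMap.proj 3) (MA_mulVec_three A) hx3 hy3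
    (hspan ▸ fun z hz hz0 => exists_mulVec_eq_smul_of_matImage_subset hAinj hfix.le hz hz0)
  exact det_eq_one_of_MA_flag hφ hA hW (hSW _ hx) (hSW _ hy) hx0 hx3 hy3 hμ hAx hAy
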